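/- arXiv:2212.09494 — 3 statements merged into one kernel-verified Lean document; each statement's English description precedes it below -/
import Mathlib

section
/- Let H and Q be integrable real-valued random variables on a probability space and let X be a random variable with values in a standard Borel space. Define π̄ := 1{E[H | X] ≥ E[Q | X]}. Then E[π̄·H + (1 − π̄)·Q] = E[ max{ E[H | X], E[Q | X] } ], and consequently E[π̄·H + (1 − π̄)·Q] ≥ max{ E[H], E[Q] }. -/
/-!
Let `f = E[H | X]` and `g = E[Q | X]`. The switching set `S = {g ≤ f}` is `σ(X)`-measurable, so on
`S` and on `Sᶜ` the conditional expectations integrate to the same values as `H` and `Q`. Hence the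
regime that follows `H` on `S` and `Q` off `S` has the value `∫ S.piecewise f g = ∫ max f g`, and
`∫ max f g` dominates both `∫ f = ∫ H` and `∫ g = ∫ Q`.
-/

open MeasureTheory ProbabilityTheory

namespace MeasureTheory

variable {Ω E : Type*} {m m₀ : MeasurableSpace Ω} {μ : Measure Ω}

theorem max_integral_le_integral_max {f g : Ω → ℝ} (hf : Integrable f μ) (hg : Integrable g μ) :
    max (∫ ω, f ω ∂μ) (∫ ω, g ω ∂μ) ≤ ∫ ω, max (f ω) (g ω) ∂μ :=
  max_le (integral_mono hf (hf.sup hg) fun _ => le_max_left _ _)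
    (integral_mono hg (hf.sup hg) fun _ => le_max_right _ _)

theorem integral_piecewise_condExp [NormedAddCommGroup E] [NormedSpace ℝ E] [CompleteSpace E]
    (hm : m ≤ m₀) [SigmaFinite (μ.trim hm)] {S : Set Ω} [DecidablePred (· ∈ S)]
    (hS : MeasurableSet[m] S) {H Q : Ω → E} (hH : Integrable H μ) (hQ : Integrable Q μ) :
    ∫ ω, S.piecewise (μ[H | m]) (μ[Q | m]) ω ∂μ = ∫ ω, S.piecewise H Q ω ∂μ := by
  rw [integral_piecewise (hm S hS) integrable_condExp.integrableOn integrable_condExp.integrableOn,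
    integral_piecewise (hm S hS) hH.integrableOn hQ.integrableOn,
    setIntegral_condExp hm hH hS, setIntegral_condExp hm hQ hS.compl]

theorem integral_ite_condExp_le_eq_integral_max (hm : m ≤ m₀) [SigmaFinite (μ.trim hm)]
    {H Q : Ω → ℝ} (hH : Integrable H μ) (hQ : Integrable Q μ) :
    ∫ ω, (if μ[Q | m] ω ≤ μ[H | m] ω then H ω else Q ω) ∂μ
      = ∫ ω, max (μ[H | m] ω) (μ[Q | m] ω) ∂μ := by
  set S := {ω | μ[Q | m] ω ≤ μ[H | m] ω}
  have hS : MeasurableSet[m] S :=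
    measurableSet_le stronglyMeasurable_condExp.measurable stronglyMeasurable_condExp.measurable
  have hmax : (fun ω => max (μ[H | m] ω) (μ[Q | m] ω)) = S.piecewise (μ[H | m]) (μ[Q | m]) := by
    ext ω
    exact max_def' _ _
  rw [hmax, integral_piecewise_condExp hm hS hH hQ]
  rfl

end MeasureTheory

theorem statement7_general
    {Ω 𝒳 : Type*} [MeasurableSpace Ω] [MeasurableSpace 𝒳]
    (μ : Measure Ω) [IsProbabilityMeasure μ]
    (X : Ω → 𝒳) (hX : Measurable X)
    (H Q : Ω → ℝ) (hH : Integrable H μ) (hQ : Integrable Q μ) :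
    (∫ ω, ((if (μ[Q | MeasurableSpace.comap X inferInstance]) ω ≤ (μ[H | MeasurableSpace.comap X inferInstance]) ω then (1 : ℝ) else 0) * H ω + (1 - (if (μ[Q | MeasurableSpace.comap X inferInstance]) ω ≤ (μ[H | MeasurableSpace.comap X inferInstance]) ω then (1 : ℝ) else 0)) * Q ω) ∂μ)
      = (∫ ω, max ((μ[H | MeasurableSpace.comap X inferInstance]) ω) ((μ[Q | MeasurableSpace.comap X inferInstance]) ω) ∂μ)
    ∧ (∫ ω, ((if (μ[Q | MeasurableSpace.comap X inferInstance]) ω ≤ (μ[H | MeasurableSpace.comap X inferInstance]) ω then (1 : ℝ) else 0) * H ω + (1 - (if (μ[Q | MeasurableSpace.comap X inferInstance]) ω ≤ (μ[H | MeasurableSpace.comap X inferInstance]) ω then (1 : ℝ) else 0)) * Q ω) ∂μ)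
      ≥ max (∫ ω, H ω ∂μ) (∫ ω, Q ω ∂μ) := by
  have hm := hX.comap_le
  have hvalue : ∫ ω, ((if μ[Q | MeasurableSpace.comap X inferInstance] ω
        ≤ μ[H | MeasurableSpace.comap X inferInstance] ω then (1 : ℝ) else 0) * H ω
      + (1 - (if μ[Q | MeasurableSpace.comap X inferInstance] ω
        ≤ μ[H | MeasurableSpace.comap X inferInstance] ω then (1 : ℝ) else 0)) * Q ω) ∂μ
      = ∫ ω, max (μ[H | MeasurableSpace.comap X inferInstance] ω)
          (μ[Q | MeasurableSpace.comap X inferInstance] ω) ∂μ := by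
    rw [← integral_ite_condExp_le_eq_integral_max hm hH hQ]
    congr with ω
    split_ifs <;> ring
  refine ⟨hvalue, ?_⟩
  rw [hvalue, ← integral_condExp (f := H) hm, ← integral_condExp (f := Q) hm]
  exact max_integral_le_integral_max integrable_condExp integrable_condExp

theorem statement7
    {Ω 𝒳 : Type*} [MeasurableSpace Ω] [MeasurableSpace 𝒳] [StandardBorelSpace 𝒳]
    (μ : Measure Ω) [IsProbabilityMeasure μ]
    (X : Ω → 𝒳) (hX : Measurable X)
    (H Q : Ω → ℝ) (hH : Integrable H μ) (hQ : Integrable Q μ) :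
    (∫ ω, ((if (μ[Q | MeasurableSpace.comap X inferInstance]) ω ≤ (μ[H | MeasurableSpace.comap X inferInstance]) ω then (1 : ℝ) else 0) * H ω + (1 - (if (μ[Q | MeasurableSpace.comap X inferInstance]) ω ≤ (μ[H | MeasurableSpace.comap X inferInstance]) ω then (1 : ℝ) else 0)) * Q ω) ∂μ)
      = (∫ ω, max ((μ[H | MeasurableSpace.comap X inferInstance]) ω) ((μ[Q | MeasurableSpace.comap X inferInstance]) ω) ∂μ)
    ∧ (∫ ω, ((if (μ[Q | MeasurableSpace.comap X inferInstance]) ω ≤ (μ[H | MeasurableSpace.comap X inferInstance]) ω then (1 : ℝ) else 0) * H ω + (1 - (if (μ[Q | MeasurableSpace.comap X inferInstance]) ω ≤ (μ[H | MeasurableSpace.comap X inferInstance]) ω then (1 : ℝ) else 0)) * Q ω) ∂μ)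
      ≥ max (∫ ω, H ω ∂μ) (∫ ω, Q ω ∂μ) :=
  statement7_general μ X hX H Q hH hQ
end

section
/- Let X be a random variable with values in a standard Borel space, let H and Q be integrable real-valued random variables, set δ := E[H | X] − E[Q | X] (a σ(X)-measurable random variable), π̄ := 1{δ ≥ 0}, and for any σ(X)-measurable real-valued random variable δ̂ set π̂ := 1{δ̂ ≥ 0}. Then E[π̄·H + (1 − π̄)·Q] − E[π̂·H + (1 − π̂)·Q] = E[ |δ| · 1{ 1{δ ≥ 0} ≠ 1{δ̂ ≥ 0} } ], and in particular this difference (the approximation error K(π̂)) is nonnegative. -/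
open MeasureTheory ProbabilityTheory
open scoped Classical

set_option linter.unusedVariables false

/-!
Conditioning on `σ(X)` turns the value of any `σ(X)`-measurable indicator policy `1_s` into
`∫ Q + ∫_s (E[H | X] - E[Q | X]) = ∫ Q + ∫_s δ`. Comparing two policies therefore only involves
`δ` on the region where they disagree, and `1{δ ≥ 0}` picks up exactly the positive part there:
`1_{δ ≥ 0} δ - 1_t δ = |δ|` on the mismatch region and `0` elsewhere.
-/

theorem ite_one_zero_mul_add_one_sub_mul {R : Type*} [Ring R] (p : Prop) [Decidable p] (a b : R) :
    (if p then 1 else 0) * a + (1 - if p then 1 else 0) * b = if p then a else b := by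
  split_ifs <;> simp

theorem ite_nonneg_sub_ite_eq_abs_mul_ite_ne {R : Type*} [Ring R] [LinearOrder R]
    [IsStrictOrderedRing R] (d : R) (p : Prop) [Decidable p] :
    (if 0 ≤ d then d else 0) - (if p then d else 0)
      = |d| * if (if 0 ≤ d then (1 : R) else 0) ≠ (if p then 1 else 0) then 1 else 0 := by
  by_cases hd : 0 ≤ d <;> by_cases hp : p <;>
    simp [hd, hp, abs_of_nonneg, abs_of_neg (not_le.mp hd)]

namespace MeasureTheory

variable {Ω : Type*} {m m₀ : MeasurableSpace Ω} {μ : Measure Ω} {H Q : Ω → ℝ} {s t : Set Ω}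
  [DecidablePred (· ∈ s)] [DecidablePred (· ∈ t)]

theorem integral_piecewise_eq_integral_add_setIntegral_condExp_sub (hm : m ≤ m₀)
    [SigmaFinite (μ.trim hm)] (hH : Integrable H μ) (hQ : Integrable Q μ)
    (hs : MeasurableSet[m] s) :
    ∫ ω, s.piecewise H Q ω ∂μ = ∫ ω, Q ω ∂μ + ∫ ω in s, (μ[H | m] - μ[Q | m]) ω ∂μ := by
  rw [integral_piecewise (hm s hs) hH.integrableOn hQ.integrableOn,
    ← integral_add_compl (hm s hs) hQ, Pi.sub_def,
    integral_sub integrable_condExp.integrableOn integrable_condExp.integrableOn,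
    setIntegral_condExp hm hH hs, setIntegral_condExp hm hQ hs]
  ring

theorem integral_piecewise_sub_integral_piecewise (hm : m ≤ m₀) [SigmaFinite (μ.trim hm)]
    (hH : Integrable H μ) (hQ : Integrable Q μ)
    (hs : MeasurableSet[m] s) (ht : MeasurableSet[m] t) :
    ∫ ω, s.piecewise H Q ω ∂μ - ∫ ω, t.piecewise H Q ω ∂μ
      = ∫ ω, (s.indicator (μ[H | m] - μ[Q | m]) ω - t.indicator (μ[H | m] - μ[Q | m]) ω) ∂μ := by
  have hδ : Integrable (μ[H | m] - μ[Q | m]) μ := integrable_condExp.sub integrable_condExp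
  rw [integral_piecewise_eq_integral_add_setIntegral_condExp_sub hm hH hQ hs,
    integral_piecewise_eq_integral_add_setIntegral_condExp_sub hm hH hQ ht,
    integral_sub (hδ.indicator (hm s hs)) (hδ.indicator (hm t ht)),
    integral_indicator (hm s hs), integral_indicator (hm t ht)]
  ring

end MeasureTheory

theorem statement15_general
    {Ω 𝒳 : Type*} [MeasurableSpace Ω] [MeasurableSpace 𝒳]
    (μ : Measure Ω) [IsProbabilityMeasure μ]
    (X : Ω → 𝒳) (hX : Measurable X)
    (H Q : Ω → ℝ) (hH : Integrable H μ) (hQ : Integrable Q μ)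
    (δhat : Ω → ℝ) (hδhat : Measurable[MeasurableSpace.comap X inferInstance] δhat) :
    let δ : Ω → ℝ := fun ω => (μ[H | MeasurableSpace.comap X inferInstance]) ω - (μ[Q | MeasurableSpace.comap X inferInstance]) ω;
    let πbar : Ω → ℝ := fun ω => if 0 ≤ δ ω then 1 else 0;
    let πhat : Ω → ℝ := fun ω => if 0 ≤ δhat ω then 1 else 0;
    ((∫ ω, (πbar ω * H ω + (1 - πbar ω) * Q ω) ∂μ)
        - (∫ ω, (πhat ω * H ω + (1 - πhat ω) * Q ω) ∂μ)
      = ∫ ω, |δ ω| *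
          (if (if 0 ≤ δ ω then (1 : ℝ) else 0) ≠ (if 0 ≤ δhat ω then (1 : ℝ) else 0)
            then 1 else 0) ∂μ)
    ∧ 0 ≤ (∫ ω, (πbar ω * H ω + (1 - πbar ω) * Q ω) ∂μ)
        - ∫ ω, (πhat ω * H ω + (1 - πhat ω) * Q ω) ∂μ := by
  intro δ πbar πhat
  have hδ : Measurable[MeasurableSpace.comap X inferInstance] δ :=
    (stronglyMeasurable_condExp.sub stronglyMeasurable_condExp).measurable
  have hs : MeasurableSet[MeasurableSpace.comap X inferInstance] {ω | 0 ≤ δ ω} :=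
    hδ measurableSet_Ici
  have ht : MeasurableSet[MeasurableSpace.comap X inferInstance] {ω | 0 ≤ δhat ω} :=
    hδhat measurableSet_Ici
  have hvalue : ∀ g : Ω → ℝ, (fun ω => (if 0 ≤ g ω then (1 : ℝ) else 0) * H ω
      + (1 - if 0 ≤ g ω then 1 else 0) * Q ω) = {ω | 0 ≤ g ω}.piecewise H Q :=
    fun g => funext fun ω => ite_one_zero_mul_add_one_sub_mul _ _ _
  have hdiff : (∫ ω, (πbar ω * H ω + (1 - πbar ω) * Q ω) ∂μ)
        - (∫ ω, (πhat ω * H ω + (1 - πhat ω) * Q ω) ∂μ)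
      = ∫ ω, |δ ω| *
          (if (if 0 ≤ δ ω then (1 : ℝ) else 0) ≠ (if 0 ≤ δhat ω then (1 : ℝ) else 0)
            then 1 else 0) ∂μ := by
    rw [hvalue δ, hvalue δhat,
      integral_piecewise_sub_integral_piecewise hX.comap_le hH hQ hs ht]
    congr 1
    funext ω
    exact ite_nonneg_sub_ite_eq_abs_mul_ite_ne (δ ω) (0 ≤ δhat ω)
  refine ⟨hdiff, hdiff ▸ integral_nonneg fun ω => mul_nonneg (abs_nonneg _) ?_⟩
  split_ifs <;> norm_num

theorem statement15
    {Ω 𝒳 : Type*} [MeasurableSpace Ω] [MeasurableSpace 𝒳] [StandardBorelSpace 𝒳]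
    (μ : Measure Ω) [IsProbabilityMeasure μ]
    (X : Ω → 𝒳) (hX : Measurable X)
    (H Q : Ω → ℝ) (hH : Integrable H μ) (hQ : Integrable Q μ)
    (δhat : Ω → ℝ) (hδhat : Measurable[MeasurableSpace.comap X inferInstance] δhat) :
    let δ : Ω → ℝ := fun ω => (μ[H | MeasurableSpace.comap X inferInstance]) ω - (μ[Q | MeasurableSpace.comap X inferInstance]) ω;
    let πbar : Ω → ℝ := fun ω => if 0 ≤ δ ω then 1 else 0;
    let πhat : Ω → ℝ := fun ω => if 0 ≤ δhat ω then 1 else 0;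
    ((∫ ω, (πbar ω * H ω + (1 - πbar ω) * Q ω) ∂μ)
        - (∫ ω, (πhat ω * H ω + (1 - πhat ω) * Q ω) ∂μ)
      = ∫ ω, |δ ω| *
          (if (if 0 ≤ δ ω then (1 : ℝ) else 0) ≠ (if 0 ≤ δhat ω then (1 : ℝ) else 0)
            then 1 else 0) ∂μ)
    ∧ 0 ≤ (∫ ω, (πbar ω * H ω + (1 - πbar ω) * Q ω) ∂μ)
        - ∫ ω, (πhat ω * H ω + (1 - πhat ω) * Q ω) ∂μ :=
  statement15_general μ X hX H Q hH hQ δhat hδhat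
end

section
/- Let X be a random variable with values in a standard Borel space, let H and Q be integrable real-valued random variables, set δ := E[H | X] − E[Q | X], π̄ := 1{δ ≥ 0}, and let δ̂ be a σ(X)-measurable real-valued random variable with π̂ := 1{δ̂ ≥ 0}. If |δ̂ − δ| ≤ ε almost surely for some ε ≥ 0, then the approximation error satisfies 0 ≤ E[π̄·H + (1 − π̄)·Q] − E[π̂·H + (1 − π̂)·Q] ≤ ε. -/
open MeasureTheory ProbabilityTheory

/-!
Both values are averages of the same two outcomes, so their difference is
`E[(π̄ - π̂)(H - Q)]`. Since `π̄ - π̂` is `σ(X)`-measurable, the tower property replaces `H - Q` by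
`δ = E[H - Q | X]`. Pointwise, `(π̄ - π̂) δ` vanishes unless `δ` and `δ̂` disagree in sign, in which
case it equals `|δ| ≤ |δ̂ - δ| ≤ ε`.
-/

lemma ite_nonneg_sub_ite_nonneg_mul_nonneg (d d' : ℝ) :
    0 ≤ ((if 0 ≤ d then 1 else 0) - (if 0 ≤ d' then 1 else 0)) * d := by
  split_ifs <;> linarith

lemma abs_ite_nonneg_sub_ite_nonneg_mul_le_abs (d d' : ℝ) :
    |((if 0 ≤ d then 1 else 0) - (if 0 ≤ d' then 1 else 0)) * d| ≤ |d' - d| := by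
  rw [abs_of_nonneg (ite_nonneg_sub_ite_nonneg_mul_nonneg d d')]
  split_ifs <;> cases abs_cases (d' - d) <;> linarith

lemma norm_ite_nonneg_sub_ite_nonneg_le_one (d d' : ℝ) :
    ‖(if 0 ≤ d then (1 : ℝ) else 0) - (if 0 ≤ d' then 1 else 0)‖ ≤ 1 := by
  split_ifs <;> norm_num

lemma norm_ite_nonneg_le_one (d : ℝ) : ‖if 0 ≤ d then (1 : ℝ) else 0‖ ≤ 1 := by
  split_ifs <;> norm_num

lemma stronglyMeasurable_ite_nonneg {Ω : Type*} {m : MeasurableSpace Ω} {d : Ω → ℝ}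
    (hd : Measurable[m] d) : StronglyMeasurable[m] (fun ω => if 0 ≤ d ω then (1 : ℝ) else 0) :=
  (Measurable.ite (measurableSet_le measurable_const hd) measurable_const
    measurable_const).stronglyMeasurable

section

variable {Ω : Type*} {m m₀ : MeasurableSpace Ω} {μ : Measure Ω}

lemma integral_mul_add_one_sub_mul {H Q p : Ω → ℝ} {C : ℝ}
    (hH : Integrable H μ) (hQ : Integrable Q μ)
    (hp : AEStronglyMeasurable p μ) (hpC : ∀ᵐ ω ∂μ, ‖p ω‖ ≤ C) :
    ∫ ω, (p ω * H ω + (1 - p ω) * Q ω) ∂μ = ∫ ω, Q ω ∂μ + ∫ ω, p ω * (H ω - Q ω) ∂μ := by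
  have hpHQ : Integrable (fun ω => p ω * (H ω - Q ω)) μ := (hH.sub hQ).bdd_mul hp hpC
  rw [← integral_add hQ hpHQ]
  exact integral_congr_ae (.of_forall fun ω => by ring)

lemma integral_mul_add_one_sub_mul_sub {H Q p p' : Ω → ℝ} {C C' : ℝ}
    (hH : Integrable H μ) (hQ : Integrable Q μ)
    (hp : AEStronglyMeasurable p μ) (hpC : ∀ᵐ ω ∂μ, ‖p ω‖ ≤ C)
    (hp' : AEStronglyMeasurable p' μ) (hp'C : ∀ᵐ ω ∂μ, ‖p' ω‖ ≤ C') :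
    (∫ ω, (p ω * H ω + (1 - p ω) * Q ω) ∂μ) - ∫ ω, (p' ω * H ω + (1 - p' ω) * Q ω) ∂μ
      = ∫ ω, (p ω - p' ω) * (H ω - Q ω) ∂μ := by
  have hpHQ : Integrable (fun ω => p ω * (H ω - Q ω)) μ := (hH.sub hQ).bdd_mul hp hpC
  have hp'HQ : Integrable (fun ω => p' ω * (H ω - Q ω)) μ := (hH.sub hQ).bdd_mul hp' hp'C
  rw [integral_mul_add_one_sub_mul hH hQ hp hpC, integral_mul_add_one_sub_mul hH hQ hp' hp'C,
    add_sub_add_left_eq_sub, ← integral_sub hpHQ hp'HQ]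
  exact integral_congr_ae (.of_forall fun ω => by ring)

lemma integral_mul_condExp_of_stronglyMeasurable (hm : m ≤ m₀) [SigmaFinite (μ.trim hm)]
    {f g : Ω → ℝ} {C : ℝ} (hf : StronglyMeasurable[m] f) (hfC : ∀ ω, ‖f ω‖ ≤ C)
    (hg : Integrable g μ) :
    ∫ ω, f ω * (μ[g | m]) ω ∂μ = ∫ ω, f ω * g ω ∂μ := by
  have hfg : Integrable (f * g) μ :=
    hg.bdd_mul (hf.mono hm).aestronglyMeasurable (.of_forall hfC)
  exact (integral_congr_ae (condExp_mul_of_stronglyMeasurable_left hf hfg hg)).symm.trans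
    (integral_condExp hm)

end

theorem statement16_general
    {Ω 𝒳 : Type*} [MeasurableSpace Ω] [MeasurableSpace 𝒳]
    (μ : Measure Ω) [IsProbabilityMeasure μ]
    (X : Ω → 𝒳) (hX : Measurable X)
    (H Q : Ω → ℝ) (hH : Integrable H μ) (hQ : Integrable Q μ)
    (δhat : Ω → ℝ) (hδhat : Measurable[MeasurableSpace.comap X inferInstance] δhat)
    (ε : ℝ)
    (hclose : ∀ᵐ ω ∂μ, |δhat ω - ((μ[H | MeasurableSpace.comap X inferInstance]) ω - (μ[Q | MeasurableSpace.comap X inferInstance]) ω)| ≤ ε) :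
    let δ : Ω → ℝ := fun ω => (μ[H | MeasurableSpace.comap X inferInstance]) ω - (μ[Q | MeasurableSpace.comap X inferInstance]) ω;
    let πbar : Ω → ℝ := fun ω => if 0 ≤ δ ω then 1 else 0;
    let πhat : Ω → ℝ := fun ω => if 0 ≤ δhat ω then 1 else 0;
    0 ≤ (∫ ω, (πbar ω * H ω + (1 - πbar ω) * Q ω) ∂μ)
        - (∫ ω, (πhat ω * H ω + (1 - πhat ω) * Q ω) ∂μ)
    ∧ (∫ ω, (πbar ω * H ω + (1 - πbar ω) * Q ω) ∂μ)
        - (∫ ω, (πhat ω * H ω + (1 - πhat ω) * Q ω) ∂μ) ≤ ε := by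
  intro δ πbar πhat
  set m := MeasurableSpace.comap X inferInstance
  have hm : m ≤ _ := hX.comap_le
  have hδ : Measurable[m] δ :=
    (stronglyMeasurable_condExp.sub stronglyMeasurable_condExp).measurable
  have hπbar := stronglyMeasurable_ite_nonneg hδ
  have hπhat := stronglyMeasurable_ite_nonneg hδhat
  have hdiff : (∫ ω, (πbar ω * H ω + (1 - πbar ω) * Q ω) ∂μ)
      - (∫ ω, (πhat ω * H ω + (1 - πhat ω) * Q ω) ∂μ) = ∫ ω, (πbar ω - πhat ω) * δ ω ∂μ := by
    rw [integral_mul_add_one_sub_mul_sub hH hQ (hπbar.mono hm).aestronglyMeasurable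
      (.of_forall fun ω => norm_ite_nonneg_le_one _) (hπhat.mono hm).aestronglyMeasurable
      (.of_forall fun ω => norm_ite_nonneg_le_one _)]
    calc ∫ ω, (πbar ω - πhat ω) * (H ω - Q ω) ∂μ
        = ∫ ω, (πbar ω - πhat ω) * (μ[H - Q | m]) ω ∂μ :=
          (integral_mul_condExp_of_stronglyMeasurable hm (hπbar.sub hπhat)
            (fun ω => norm_ite_nonneg_sub_ite_nonneg_le_one _ _) (hH.sub hQ)).symm
      _ = ∫ ω, (πbar ω - πhat ω) * δ ω ∂μ :=
          integral_congr_ae ((condExp_sub hH hQ m).mono fun ω hω =>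
            congrArg ((πbar ω - πhat ω) * ·) hω)
  rw [hdiff]
  refine ⟨integral_nonneg fun ω => ite_nonneg_sub_ite_nonneg_mul_nonneg _ _, ?_⟩
  calc ∫ ω, (πbar ω - πhat ω) * δ ω ∂μ
      ≤ ‖∫ ω, (πbar ω - πhat ω) * δ ω ∂μ‖ := le_abs_self _
    _ ≤ ε * μ.real Set.univ := norm_integral_le_of_norm_le_const
        (hclose.mono fun ω hω => (abs_ite_nonneg_sub_ite_nonneg_mul_le_abs _ _).trans hω)
    _ = ε := by simp

theorem statement16
    {Ω 𝒳 : Type*} [MeasurableSpace Ω] [MeasurableSpace 𝒳] [StandardBorelSpace 𝒳]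
    (μ : Measure Ω) [IsProbabilityMeasure μ]
    (X : Ω → 𝒳) (hX : Measurable X)
    (H Q : Ω → ℝ) (hH : Integrable H μ) (hQ : Integrable Q μ)
    (δhat : Ω → ℝ) (hδhat : Measurable[MeasurableSpace.comap X inferInstance] δhat)
    (ε : ℝ) (hε : 0 ≤ ε)
    (hclose : ∀ᵐ ω ∂μ, |δhat ω - ((μ[H | MeasurableSpace.comap X inferInstance]) ω - (μ[Q | MeasurableSpace.comap X inferInstance]) ω)| ≤ ε) :
    let δ : Ω → ℝ := fun ω => (μ[H | MeasurableSpace.comap X inferInstance]) ω - (μ[Q | MeasurableSpace.comap X inferInstance]) ω;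
    let πbar : Ω → ℝ := fun ω => if 0 ≤ δ ω then 1 else 0;
    let πhat : Ω → ℝ := fun ω => if 0 ≤ δhat ω then 1 else 0;
    0 ≤ (∫ ω, (πbar ω * H ω + (1 - πbar ω) * Q ω) ∂μ)
        - (∫ ω, (πhat ω * H ω + (1 - πhat ω) * Q ω) ∂μ)
    ∧ (∫ ω, (πbar ω * H ω + (1 - πbar ω) * Q ω) ∂μ)
        - (∫ ω, (πhat ω * H ω + (1 - πhat ω) * Q ω) ∂μ) ≤ ε :=
  statement16_general μ X hX H Q hH hQ δhat hδhat ε hclose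
end
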